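/- Let X be a smooth projective surface, let D' be a connected reduced divisor with irreducible components C₁, …, C_m, and let W be an effective nef divisor supported on a subset of the C_i, with the property that every irreducible curve C in the support of W but not in the support of a fixed subdivisor G satisfies C·W > 0. Suppose C is an irreducible component of D' not in the support of W with C·W ≠ 0. Then for κ sufficiently large, W' := κW + C is an effective nef divisor, its support strictly contains that of W, and every irreducible curve C' in the support of W' not in the support of G satisfies C'·W' > 0. -/
import Mathlib


/-- **Inductive step for constructing nef divisors.**
Abstract setting for curves on a smooth projective surface: `Curve` is the type of
irreducible curves, `cl` their classes, `B` the intersection pairing (with positivity of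
intersection for distinct irreducible curves).  An effective divisor is a finitely
supported function `Curve →₀ ℕ`; its class is the corresponding sum.  Suppose `W` is an
effective nef divisor such that every irreducible curve in its support but not in the
support of `G` (given as the set `Gsupp`) meets `W` positively, and `c₀` is an
irreducible curve not in the support of `W` with `c₀ · W ≠ 0`.  Then for `κ`
sufficiently large, `W' := κ·W + c₀` is an effective nef divisor, its support strictly
contains that of `W`, and every irreducible curve in the support of `W'` not in `Gsupp`
meets `W'` positively. -/
theorem nef_divisor_inductive_step
    {N : Type*} [AddCommGroup N] {Curve : Type*} [DecidableEq Curve]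
    (cl : Curve → N) (B : N →+ N →+ ℤ)
    -- positivity of intersection for distinct irreducible curves
    (hpos : ∀ c c' : Curve, c ≠ c' → 0 ≤ B (cl c) (cl c'))
    (W : Curve →₀ ℕ) (Gsupp : Set Curve)
    (clW : N) (hclW : clW = W.sum fun c n => (n : ℤ) • cl c)
    -- `W` is nef
    (hWnef : ∀ c : Curve, 0 ≤ B clW (cl c))
    -- every curve in the support of `W` but not in `Gsupp` meets `W` positively
    (hWpos : ∀ c ∈ W.support, c ∉ Gsupp → 0 < B clW (cl c))
    (c₀ : Curve) (hc₀ : c₀ ∉ W.support) (hc₀W : B clW (cl c₀) ≠ 0) :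
    ∃ κ₀ : ℕ, ∀ κ : ℕ, κ₀ ≤ κ →
      -- `W' = κ•W + c₀` is nef
      (∀ c : Curve, 0 ≤ B ((κ : ℤ) • clW + cl c₀) (cl c)) ∧
      -- its support is `insert c₀ (support W)`, strictly containing `support W`
      (κ • W + Finsupp.single c₀ 1).support = insert c₀ W.support ∧
      W.support ⊂ (κ • W + Finsupp.single c₀ 1).support ∧
      -- every curve in the support of `W'` not in `Gsupp` meets `W'` positively
      (∀ c ∈ (κ • W + Finsupp.single c₀ 1).support, c ∉ Gsupp →
        0 < B ((κ : ℤ) • clW + cl c₀) (cl c)) := by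

  have ha : 0 < B clW (cl c₀) := lt_of_le_of_ne (hWnef c₀) (Ne.symm hc₀W)
  have ha1 : 1 ≤ B clW (cl c₀) := ha
  refine ⟨max 1 (1 - B (cl c₀) (cl c₀)).toNat, fun κ hκ => ?_⟩
  have hκ1 : 1 ≤ κ := le_trans (le_max_left _ _) hκ
  have hκb : 1 - B (cl c₀) (cl c₀) ≤ (κ : ℤ) := by
    calc 1 - B (cl c₀) (cl c₀) ≤ ((1 - B (cl c₀) (cl c₀)).toNat : ℤ) := Int.self_le_toNat _
    _ ≤ (κ : ℤ) := by exact_mod_cast le_trans (le_max_right _ _) hκ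
  have key : ∀ c : Curve, B ((κ : ℤ) • clW + cl c₀) (cl c)
      = (κ : ℤ) * B clW (cl c) + B (cl c₀) (cl c) := by
    intro c
    simp [map_add, map_zsmul, smul_eq_mul]
  have hc0pos : 0 < B ((κ : ℤ) • clW + cl c₀) (cl c₀) := by
    rw [key]
    have : (κ : ℤ) * 1 ≤ (κ : ℤ) * B clW (cl c₀) :=
      mul_le_mul_of_nonneg_left ha1 (by positivity)
    linarith
  have hnef : ∀ c : Curve, 0 ≤ B ((κ : ℤ) • clW + cl c₀) (cl c) := by
    intro c
    by_cases hcc : c = c₀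
    · subst hcc; exact le_of_lt hc0pos
    · rw [key]
      have h1 := hWnef c
      have h2 := hpos c₀ c (fun h => hcc h.symm)
      positivity
  have hsupp : (κ • W + Finsupp.single c₀ 1).support = insert c₀ W.support := by
    rw [Finsupp.support_add_eq, Finsupp.support_smul_eq (by omega : κ ≠ 0),
      Finsupp.support_single_ne_zero c₀ one_ne_zero]
    · ext c; simp [or_comm]
    · rw [Finsupp.support_smul_eq (by omega : κ ≠ 0),
        Finsupp.support_single_ne_zero c₀ one_ne_zero]
      simpa using hc₀
  refine ⟨hnef, hsupp, ?_, ?_⟩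
  · rw [hsupp]
    exact Finset.ssubset_insert hc₀
  · intro c hc hcG
    rw [hsupp] at hc
    rcases Finset.mem_insert.mp hc with rfl | hc
    · exact hc0pos
    · rw [key]
      have h1 := hWpos c hc hcG
      have h2 := hpos c₀ c (fun h => hc₀ (h ▸ hc))
      have : (κ : ℤ) * 1 ≤ (κ : ℤ) * B clW (cl c) :=
        mul_le_mul_of_nonneg_left h1 (by positivity)
      linarith
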